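/- Let z_1, ..., z_N be the zeros of H_N and let v_n := (z_1^{n-1},...,z_N^{n-1})^T for 1 \le n \le N. With S_N the matrix with s_{ii} = 1 + \sum_{l\ne i}(z_i-z_l)^{-2}, s_{ij} = -(z_i-z_j)^{-2} (i\ne j), the i-th coordinate of (S_N - n I_N)v_n equals (1-n)z_i^{n-1} + \sum_{j \ne i} (z_i^{n-1} - z_j^{n-1})/(z_i - z_j)^2, and this equals -\sum_{m=1}^{n-2} \sum_{l=0}^{m-1} z_i^{n-3-l} ( s_l - z_i^l ), where s_l = \sum_{j=1}^N z_j^l. -/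

import Mathlib

open Polynomial Finset Matrix

/-- The physicists' Hermite polynomials, orthogonal w.r.t. the weight `e^{-x^2}`. -/
noncomputable def physHermite : ℕ → Polynomial ℝ
  | 0 => 1
  | 1 => 2 * X
  | n + 2 => 2 * X * physHermite (n + 1) - C (2 * ((n : ℝ) + 1)) * physHermite n

/-!
Everything rests on the Stieltjes relations `∑_{j ≠ i} (z_i - z_j)⁻¹ = z_i`. Since
`H_N = 2^N ∏_k (X - z_k)` has simple zeros, `H_N''(z_i) = 2 H_N'(z_i) ∑_{j ≠ i} (z_i - z_j)⁻¹`
and `H_N'(z_i) ≠ 0`, while the Hermite equation `H'' = 2 X H' - 2 N H` gives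
`H_N''(z_i) = 2 z_i H_N'(z_i)`.

For the second identity write `m = n - 1` and expand
`(a^m - b^m) / (a - b)^2 = m a^(m-1) / (a - b) - ∑_{l < m} ∑_{p < l} a^(m-2-p) b^p`.
Summing over `j ≠ i`, the Stieltjes relation turns the first terms into `m z_i^m`, which cancels
`(1 - n) z_i^(n-1)`, and the power sums `∑_{j ≠ i} z_j^p = s_p - z_i^p` appear in the rest.
-/

-- The exponents `m - 1 - l`, `m - 2 - p` never truncate, since `p < l < m`.
theorem pow_sub_pow_eq_mul_sub_sq_mul_sum {R : Type*} [CommRing R] (a b : R) (m : ℕ) :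
    a ^ m - b ^ m = (a - b) * (m * a ^ (m - 1))
      - (a - b) ^ 2 * ∑ l ∈ range m, ∑ p ∈ range l, a ^ (m - 2 - p) * b ^ p := by
  have hgeom (k : ℕ) : a ^ k - b ^ k = (a - b) * ∑ p ∈ range k, b ^ p * a ^ (k - 1 - p) :=
    ((Commute.all b a).mul_neg_geom_sum₂ k).symm
  have hterm : ∀ l ∈ range m, a ^ (m - 1) - b ^ l * a ^ (m - 1 - l)
      = (a - b) * ∑ p ∈ range l, a ^ (m - 2 - p) * b ^ p := by
    intro l hl
    have hsplit : a ^ (m - 1) = a ^ (m - 1 - l) * a ^ l := by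
      rw [← pow_add]; congr 1; have := mem_range.1 hl; omega
    rw [hsplit, mul_comm (b ^ l), ← mul_sub, hgeom, mul_sum, mul_sum, mul_sum]
    refine sum_congr rfl fun p hp => ?_
    have hexp : m - 2 - p = (m - 1 - l) + (l - 1 - p) := by
      have := mem_range.1 hl; have := mem_range.1 hp; omega
    rw [hexp, pow_add]
    ring
  calc a ^ m - b ^ m = (a - b) * ∑ l ∈ range m, b ^ l * a ^ (m - 1 - l) := hgeom m
    _ = (a - b) * (m * a ^ (m - 1)
          - ∑ l ∈ range m, (a ^ (m - 1) - b ^ l * a ^ (m - 1 - l))) := by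
      rw [sum_sub_distrib, sum_const, card_range, nsmul_eq_mul, sub_sub_cancel]
    _ = _ := by rw [sum_congr rfl hterm, ← mul_sum]; ring

namespace Lagrange

variable {K ι : Type*} [Field K] [DecidableEq ι] {s : Finset ι} {v : ι → K}

theorem eval_derivative_nodal_of_ne {x : K} (hx : ∀ j ∈ s, x ≠ v j) :
    eval x (derivative (nodal s v)) = eval x (nodal s v) * ∑ j ∈ s, (x - v j)⁻¹ := by
  induction s using Finset.induction_on with
  | empty => simp
  | insert k s hk ih =>
    have hxk : x - v k ≠ 0 := sub_ne_zero.2 (hx k (mem_insert_self k s))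
    rw [nodal_insert_eq_nodal hk, derivative_mul, sum_insert hk, eval_add, eval_mul, eval_mul,
      eval_mul, ih fun j hj => hx j (mem_insert_of_mem hj)]
    simp only [derivative_X_sub_C, eval_one, eval_sub, eval_X, eval_C]
    field_simp

theorem eval_derivative_derivative_nodal_at_node {i : ι} (hvs : Set.InjOn v s) (hi : i ∈ s) :
    eval (v i) (derivative (derivative (nodal s v)))
      = 2 * eval (v i) (derivative (nodal s v)) * ∑ j ∈ s.erase i, (v i - v j)⁻¹ := by
  have hne : ∀ j ∈ s.erase i, v i ≠ v j := fun j hj h =>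
    (mem_erase.1 hj).1 (hvs (mem_erase.1 hj).2 hi h.symm)
  rw [eval_nodal_derivative_eval_node_eq hi, mul_assoc, ← eval_derivative_nodal_of_ne hne,
    nodal_eq_mul_nodal_erase hi, derivative_mul, derivative_X_sub_C, one_mul, derivative_add,
    derivative_mul, derivative_X_sub_C, one_mul, eval_add, eval_add, eval_mul, eval_sub, eval_X,
    eval_C, sub_self, zero_mul, add_zero]
  ring

theorem eval_derivative_nodal_at_node_ne_zero {i : ι} (hvs : Set.InjOn v s) (hi : i ∈ s) :
    eval (v i) (derivative (nodal s v)) ≠ 0 := by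
  rw [eval_nodal_derivative_eval_node_eq hi]
  exact eval_nodal_not_at_node fun j hj h =>
    (mem_erase.1 hj).1 (hvs (mem_erase.1 hj).2 hi h.symm)

end Lagrange

section

variable {K ι : Type*} [Field K] [Fintype ι] [DecidableEq ι]

def stieltjesMatrix (z : ι → K) : Matrix ι ι K :=
  Matrix.of fun i j => if i = j then 1 + ∑ l ∈ univ.erase i, ((z i - z l) ^ 2)⁻¹
    else -((z i - z j) ^ 2)⁻¹

theorem stieltjesMatrix_mulVec_apply (z v : ι → K) (i : ι) :
    (stieltjesMatrix z *ᵥ v) i = v i + ∑ j ∈ univ.erase i, (v i - v j) / (z i - z j) ^ 2 := by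
  rw [mulVec, dotProduct, ← add_sum_erase _ _ (mem_univ i)]
  simp only [stieltjesMatrix, of_apply, if_pos, add_mul, one_mul, sum_mul, add_assoc,
    ← sum_add_distrib]
  refine congrArg (v i + ·) (sum_congr rfl fun j hj => ?_)
  rw [if_neg (mem_erase.1 hj).1.symm]
  ring

theorem sum_erase_pow_sub_pow_div_sq {z : ι → K} (hz : Function.Injective z) {i : ι}
    (hstieltjes : ∑ j ∈ univ.erase i, (z i - z j)⁻¹ = z i) (m : ℕ) :
    ∑ j ∈ univ.erase i, (z i ^ m - z j ^ m) / (z i - z j) ^ 2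
      = m * z i ^ m
        - ∑ l ∈ range m, ∑ p ∈ range l, z i ^ (m - 2 - p) * (∑ j, z j ^ p - z i ^ p) := by
  have hterm : ∀ j ∈ univ.erase i, (z i ^ m - z j ^ m) / (z i - z j) ^ 2
      = m * z i ^ (m - 1) * (z i - z j)⁻¹
        - ∑ l ∈ range m, ∑ p ∈ range l, z i ^ (m - 2 - p) * z j ^ p := by
    intro j hj
    have hij : z i - z j ≠ 0 := sub_ne_zero.2 (hz.ne (mem_erase.1 hj).1.symm)
    rw [pow_sub_pow_eq_mul_sub_sq_mul_sum]
    field_simp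
  have hpow : (m : K) * z i ^ (m - 1) * z i = m * z i ^ m := by
    rcases m with _ | m <;> simp [pow_succ, mul_assoc]
  rw [sum_congr rfl hterm, sum_sub_distrib, ← mul_sum, hstieltjes, hpow, sum_comm]
  congr 1
  refine sum_congr rfl fun l _ => ?_
  rw [sum_comm]
  refine sum_congr rfl fun p _ => ?_
  rw [← mul_sum, sum_erase_eq_sub (mem_univ i)]

end

theorem physHermite_succ_succ (n : ℕ) : physHermite (n + 2)
    = 2 * X * physHermite (n + 1) - C (2 * ((n : ℝ) + 1)) * physHermite n := rfl

theorem derivative_physHermite_succ :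
    ∀ n : ℕ, derivative (physHermite (n + 1)) = C (2 * ((n : ℝ) + 1)) * physHermite n
  | 0 => by simp [physHermite, map_ofNat]
  | 1 => by simp [physHermite, map_ofNat]; ring
  | n + 2 => by
    rw [physHermite_succ_succ (n + 1), derivative_sub, derivative_mul, derivative_C_mul,
      derivative_physHermite_succ (n + 1), derivative_physHermite_succ n, physHermite_succ_succ n]
    simp [map_ofNat]
    ring

theorem derivative_derivative_physHermite (n : ℕ) :
    derivative (derivative (physHermite n))
      = 2 * X * derivative (physHermite n) - C (2 * (n : ℝ)) * physHermite n := by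
  rcases n with _ | _ | n
  · simp [physHermite]
  · simp [physHermite, map_ofNat]
    ring
  · rw [derivative_physHermite_succ, derivative_C_mul, derivative_physHermite_succ,
      physHermite_succ_succ]
    simp [map_ofNat]
    ring

theorem natDegree_physHermite_le : ∀ n, (physHermite n).natDegree ≤ n
  | 0 => by simp [physHermite]
  | 1 => by simp [physHermite]
  | n + 2 => by
    have h2X : (2 * X : ℝ[X]).natDegree ≤ 1 := by compute_degree
    rw [physHermite_succ_succ]
    refine (natDegree_sub_le _ _).trans (max_le ?_ ?_)
    · exact (natDegree_mul_le_of_le h2X (natDegree_physHermite_le (n + 1))).trans_eq (by ring)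
    · exact (natDegree_C_mul_le _ _).trans ((natDegree_physHermite_le n).trans (by omega))

theorem coeff_physHermite_self : ∀ n, (physHermite n).coeff n = 2 ^ n
  | 0 => by simp [physHermite]
  | 1 => by simp [physHermite]
  | n + 2 => by
    rw [physHermite_succ_succ, coeff_sub, coeff_C_mul,
      coeff_eq_zero_of_natDegree_lt ((natDegree_physHermite_le n).trans_lt (by omega)),
      mul_assoc, coeff_ofNat_mul, coeff_X_mul, coeff_physHermite_self (n + 1)]
    ring

theorem degree_physHermite (n : ℕ) : (physHermite n).degree = n :=
  degree_eq_of_le_of_coeff_ne_zero (degree_le_of_natDegree_le (natDegree_physHermite_le n))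
    (by simp [coeff_physHermite_self])

theorem leadingCoeff_physHermite (n : ℕ) : (physHermite n).leadingCoeff = 2 ^ n := by
  rw [leadingCoeff, natDegree_eq_of_degree_eq_some (degree_physHermite n), coeff_physHermite_self]

theorem physHermite_eq_C_mul_nodal {N : ℕ} {z : Fin N → ℝ} (hz : Function.Injective z)
    (hroot : ∀ i, (physHermite N).eval (z i) = 0) :
    physHermite N = C (2 ^ N) * Lagrange.nodal univ z := by
  refine eq_of_degree_le_of_eval_index_eq univ hz.injOn ?_ ?_ ?_ ?_
  · simp [degree_physHermite]
  · rw [degree_physHermite, degree_C_mul (by positivity), Lagrange.degree_nodal, card_univ,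
      Fintype.card_fin]
  · rw [leadingCoeff_physHermite, leadingCoeff_C_mul_of_isUnit (by simp),
      Lagrange.nodal_monic.leadingCoeff, mul_one]
  · intro i _
    rw [hroot, eval_mul, Lagrange.eval_nodal_at_node (mem_univ i), mul_zero]

theorem sum_inv_sub_eq_of_physHermite_roots {N : ℕ} {z : Fin N → ℝ}
    (hz : Function.Injective z)
    (hroot : ∀ i, (physHermite N).eval (z i) = 0) (i : Fin N) :
    ∑ j ∈ univ.erase i, (z i - z j)⁻¹ = z i := by
  have hode : eval (z i) (derivative (derivative (physHermite N)))
      = 2 * z i * eval (z i) (derivative (physHermite N)) := by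
    rw [derivative_derivative_physHermite]
    simp [hroot i]
  rw [physHermite_eq_C_mul_nodal hz hroot, derivative_C_mul, derivative_C_mul, eval_mul, eval_mul,
    eval_C, Lagrange.eval_derivative_derivative_nodal_at_node hz.injOn (mem_univ i)] at hode
  have hne : 2 * 2 ^ N * eval (z i) (derivative (Lagrange.nodal univ z)) ≠ 0 :=
    mul_ne_zero (by positivity)
      (Lagrange.eval_derivative_nodal_at_node_ne_zero hz.injOn (mem_univ i))
  exact mul_left_cancel₀ hne (by linear_combination hode)

theorem stmt_10_general (N : ℕ) (z : Fin N → ℝ)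
    (hord : ∀ i j : Fin N, i < j → z j < z i)
    (hroot : ∀ i, (physHermite N).eval (z i) = 0)
    (S : Matrix (Fin N) (Fin N) ℝ)
    (hS : ∀ i j, S i j = if i = j
      then 1 + ∑ l ∈ Finset.univ.erase i, ((z i - z l) ^ 2)⁻¹
      else -((z i - z j) ^ 2)⁻¹)
    (s : ℕ → ℝ) (hs : ∀ l, s l = ∑ j, (z j) ^ l)
    (n : ℕ) (hn1 : 1 ≤ n)
    (v : Fin N → ℝ) (hv : ∀ i, v i = (z i) ^ (n - 1)) :
    ∀ i, (S.mulVec v - (n : ℝ) • v) i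
        = (1 - (n : ℝ)) * (z i) ^ (n - 1)
          + ∑ j ∈ Finset.univ.erase i, ((z i) ^ (n - 1) - (z j) ^ (n - 1)) / (z i - z j) ^ 2 ∧
      (S.mulVec v - (n : ℝ) • v) i
        = -∑ m ∈ Finset.Icc 1 (n - 2), ∑ l ∈ Finset.range m,
            (z i) ^ (n - 3 - l) * (s l - (z i) ^ l) := by
  intro i
  have hz : Function.Injective z := StrictAnti.injective fun a b hab => hord a b hab
  have hSz : S = stieltjesMatrix z := Matrix.ext hS
  have hvz : v = fun j => z j ^ (n - 1) := funext hv
  have hfirst : (S *ᵥ v - (n : ℝ) • v) i = (1 - (n : ℝ)) * z i ^ (n - 1)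
      + ∑ j ∈ univ.erase i, (z i ^ (n - 1) - z j ^ (n - 1)) / (z i - z j) ^ 2 := by
    rw [hSz, hvz, Pi.sub_apply, stieltjesMatrix_mulVec_apply, Pi.smul_apply, smul_eq_mul]
    ring
  refine ⟨hfirst, ?_⟩
  obtain ⟨m, rfl⟩ := Nat.exists_eq_add_of_le' hn1
  rw [hfirst, sum_erase_pow_sub_pow_div_sq hz (sum_inv_sub_eq_of_physHermite_roots hz hroot i)]
  have hexp (l : ℕ) : m + 1 - 3 - l = m - 2 - l := by omega
  have hrange : Icc 1 (m + 1 - 2) ⊆ range m := fun l hl => by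
    simp only [mem_Icc, mem_range] at hl ⊢; omega
  have hzero : ∀ l ∈ range m, l ∉ Icc 1 (m + 1 - 2) → l = 0 := fun l hl hl' => by
    simp only [mem_Icc, mem_range] at hl hl'; omega
  rw [sum_subset hrange fun l hl hl' => by simp [hzero l hl hl']]
  simp only [hs, hexp, Nat.add_sub_cancel, Nat.cast_add, Nat.cast_one]
  ring

theorem stmt_10 (N : ℕ) (z : Fin N → ℝ)
    (hord : ∀ i j : Fin N, i < j → z j < z i)
    (hroot : ∀ i, (physHermite N).eval (z i) = 0)
    (S : Matrix (Fin N) (Fin N) ℝ)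
    (hS : ∀ i j, S i j = if i = j
      then 1 + ∑ l ∈ Finset.univ.erase i, ((z i - z l) ^ 2)⁻¹
      else -((z i - z j) ^ 2)⁻¹)
    (s : ℕ → ℝ) (hs : ∀ l, s l = ∑ j, (z j) ^ l)
    (n : ℕ) (hn1 : 1 ≤ n) (hnN : n ≤ N)
    (v : Fin N → ℝ) (hv : ∀ i, v i = (z i) ^ (n - 1)) :
    ∀ i, (S.mulVec v - (n : ℝ) • v) i
        = (1 - (n : ℝ)) * (z i) ^ (n - 1)
          + ∑ j ∈ Finset.univ.erase i, ((z i) ^ (n - 1) - (z j) ^ (n - 1)) / (z i - z j) ^ 2 ∧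
      (S.mulVec v - (n : ℝ) • v) i
        = -∑ m ∈ Finset.Icc 1 (n - 2), ∑ l ∈ Finset.range m,
            (z i) ^ (n - 3 - l) * (s l - (z i) ^ l) :=
  stmt_10_general N z hord hroot S hS s hs n hn1 v hv
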